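/- Let X be a sequentially complete Hausdorff locally convex space, (T(t))_{t≥0} a strongly continuous locally equicontinuous semigroup on X with generator (A, D(A)), U a Hausdorff locally convex space and B ∈ L(U;X). (a) If for some r > 0 one has (T∗Bf)(r) ∈ D(A) for all f ∈ C([0,r];U), then (T∗Bf)(t) ∈ D(A) for all f ∈ C([0,r];U) and all t ∈ [0,r]. (b) If (T∗Bf)(r) ∈ D(A) for all f ∈ C([0,r];U) holds for some r > 0, then it holds for all r > 0. -/

import Mathlib

open Filter Topology Set Classical
open scoped ENNReal

/-- A partition `a = d₀ < d₁ < ⋯ < dₙ = b` of the interval `[a,b]`. -/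
structure IntervalPartition (a b : ℝ) where
  n : ℕ
  points : ℕ → ℝ
  first_eq : points 0 = a
  last_eq : points n = b
  increasing : ∀ i, i < n → points i < points (i + 1)

section Defs

variable {X Y U : Type*}
variable [AddCommGroup X] [Module ℝ X] [UniformSpace X] [IsUniformAddGroup X] [ContinuousSMul ℝ X]
variable [AddCommGroup Y] [Module ℝ Y] [UniformSpace Y] [IsUniformAddGroup Y] [ContinuousSMul ℝ Y]
variable [AddCommGroup U] [Module ℝ U] [UniformSpace U] [IsUniformAddGroup U] [ContinuousSMul ℝ U]

/-- The semivariation `SV_{q,p}(α)` of `α : [a,b] → L(X;Y)` (value in `ℝ≥0∞`). -/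
noncomputable def SV (α : ℝ → X →L[ℝ] Y) (q : Seminorm ℝ Y) (p : Seminorm ℝ X)
    (a b : ℝ) : ℝ≥0∞ :=
  ⨆ (d : IntervalPartition a b) (x : ℕ → X) (_ : ∀ i, i < d.n → p (x i) ≤ 1),
    ENNReal.ofReal
      (q (∑ i ∈ Finset.range d.n,
        (α (d.points (i + 1)) (x i) - α (d.points i) (x i))))

/-- `α : [a,b] → L(X;Y)` is of bounded semivariation. -/
def BoundedSemivariation (α : ℝ → X →L[ℝ] Y) (a b : ℝ) : Prop :=
  ∀ q : Seminorm ℝ Y, Continuous ⇑q →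
    ∃ p : Seminorm ℝ X, Continuous ⇑p ∧ SV α q p a b < ⊤

/-- `y` is the Riemann–Stieltjes integral `∫_a^b f dα`. -/
def IsRSIntegral (α : ℝ → X →L[ℝ] Y) (f : ℝ → X) (a b : ℝ) (y : Y) : Prop :=
  ∀ q : Seminorm ℝ Y, Continuous ⇑q → ∀ ε : ℝ, 0 < ε → ∃ δ : ℝ, 0 < δ ∧
    ∀ (d : IntervalPartition a b) (c : ℕ → ℝ),
      (∀ i, i < d.n → d.points (i + 1) - d.points i < δ) →
      (∀ i, i < d.n → c i ∈ Set.Icc (d.points i) (d.points (i + 1))) →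
      q ((∑ i ∈ Finset.range d.n,
        (α (d.points (i + 1)) (f (c i)) - α (d.points i) (f (c i)))) - y) < ε

/-- The Riemann–Stieltjes integral `∫_a^b f dα` (junk value `0` if it does not exist). -/
noncomputable def RSIntegral (α : ℝ → X →L[ℝ] Y) (f : ℝ → X) (a b : ℝ) : Y :=
  if h : ∃ y, IsRSIntegral α f a b y then h.choose else 0

/-- `y` is the Riemann integral `∫_a^b f(s) ds`. -/
def IsRiemannIntegral (f : ℝ → X) (a b : ℝ) (y : X) : Prop :=
  ∀ q : Seminorm ℝ X, Continuous ⇑q → ∀ ε : ℝ, 0 < ε → ∃ δ : ℝ, 0 < δ ∧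
    ∀ (d : IntervalPartition a b) (c : ℕ → ℝ),
      (∀ i, i < d.n → d.points (i + 1) - d.points i < δ) →
      (∀ i, i < d.n → c i ∈ Set.Icc (d.points i) (d.points (i + 1))) →
      q ((∑ i ∈ Finset.range d.n, (d.points (i + 1) - d.points i) • f (c i)) - y) < ε

/-- The Riemann integral `∫_a^b f(s) ds` (junk value `0` if it does not exist). -/
noncomputable def riemannIntegral (f : ℝ → X) (a b : ℝ) : X :=
  if h : ∃ y, IsRiemannIntegral f a b y then h.choose else 0

/-- Sequential completeness: every Cauchy sequence converges. -/
def SequentiallyComplete (Z : Type*) [UniformSpace Z] : Prop :=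
  ∀ u : ℕ → Z, CauchySeq u → ∃ z, Filter.Tendsto u Filter.atTop (𝓝 z)

/-- A strongly continuous, locally equicontinuous semigroup. -/
def IsSCLESemigroup (T : ℝ → X →L[ℝ] X) : Prop :=
  T 0 = ContinuousLinearMap.id ℝ X ∧
  (∀ s t : ℝ, 0 ≤ s → 0 ≤ t → T (s + t) = (T s).comp (T t)) ∧
  (∀ x : X, ContinuousOn (fun t => T t x) (Set.Ici (0:ℝ))) ∧
  (∀ q : Seminorm ℝ X, Continuous ⇑q → ∀ t₀ : ℝ, 0 ≤ t₀ →
    ∃ p : Seminorm ℝ X, Continuous ⇑p ∧ ∃ C : ℝ, 0 ≤ C ∧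
      ∀ t ∈ Set.Icc (0:ℝ) t₀, ∀ x : X, q (T t x) ≤ C * p x)

/-- A strongly continuous, quasi-equicontinuous semigroup. -/
def IsSCQESemigroup (T : ℝ → X →L[ℝ] X) : Prop :=
  T 0 = ContinuousLinearMap.id ℝ X ∧
  (∀ s t : ℝ, 0 ≤ s → 0 ≤ t → T (s + t) = (T s).comp (T t)) ∧
  (∀ x : X, ContinuousOn (fun t => T t x) (Set.Ici (0:ℝ))) ∧
  (∃ ω : ℝ, ∀ q : Seminorm ℝ X, Continuous ⇑q →
    ∃ p : Seminorm ℝ X, Continuous ⇑p ∧ ∃ C : ℝ, 0 ≤ C ∧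
      ∀ t : ℝ, 0 ≤ t → ∀ x : X, q (Real.exp (-ω * t) • T t x) ≤ C * p x)

/-- The domain of the generator of a semigroup. -/
def genDomain (T : ℝ → X →L[ℝ] X) : Set X :=
  {x | ∃ y : X, Filter.Tendsto (fun t : ℝ => t⁻¹ • (T t x - x)) (𝓝[>] (0:ℝ)) (𝓝 y)}

/-- The generator of a semigroup (junk value `0` outside of its domain). -/
noncomputable def generator (T : ℝ → X →L[ℝ] X) (x : X) : X :=
  if h : ∃ y : X, Filter.Tendsto (fun t : ℝ => t⁻¹ • (T t x - x)) (𝓝[>] (0:ℝ)) (𝓝 y)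
  then h.choose else 0

/-- The convolution `(T∗f)(t) = ∫_0^t T(t-s) f(s) ds`. -/
noncomputable def sgConv (T : ℝ → X →L[ℝ] X) (f : ℝ → X) (t : ℝ) : X :=
  riemannIntegral (fun s => T (t - s) (f s)) 0 t

/-- `v` is the derivative of `u` at `t` within the set `s` (limit of difference quotients). -/
def HasDerivWithinSetLC (u : ℝ → X) (v : X) (s : Set ℝ) (t : ℝ) : Prop :=
  Filter.Tendsto (fun h : ℝ => h⁻¹ • (u (t + h) - u t))
    (𝓝[{h : ℝ | h ≠ 0 ∧ t + h ∈ s}] (0:ℝ)) (𝓝 v)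

/-- `u` is continuously differentiable on `s` with derivative `u'`. -/
def IsC1On (u u' : ℝ → X) (s : Set ℝ) : Prop :=
  ContinuousOn u s ∧ ContinuousOn u' s ∧ ∀ t ∈ s, HasDerivWithinSetLC u (u' t) s t

/-- `u` is a strict solution of `u' = Au + g` on `[0,r]`, `u(0) = x`. -/
def IsStrictSolution (T : ℝ → X →L[ℝ] X) (g : ℝ → X) (x : X) (r : ℝ) (u : ℝ → X) : Prop :=
  u 0 = x ∧ (∀ t ∈ Set.Icc (0:ℝ) r, u t ∈ genDomain T) ∧
  ∃ u' : ℝ → X, IsC1On u u' (Set.Icc (0:ℝ) r) ∧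
    ∀ t ∈ Set.Icc (0:ℝ) r, u' t = generator T (u t) + g t

/-- `(T(t))` satisfies C-maximal regularity for `(B,r)`. -/
def CMaxReg (T : ℝ → X →L[ℝ] X) (B : U →L[ℝ] X) (r : ℝ) : Prop :=
  ∀ f : ℝ → U, ContinuousOn f (Set.Icc (0:ℝ) r) →
    (∀ t ∈ Set.Icc (0:ℝ) r, sgConv T (fun s => B (f s)) t ∈ genDomain T) ∧
    ContinuousOn (fun t => generator T (sgConv T (fun s => B (f s)) t)) (Set.Icc (0:ℝ) r)

end Defs


/-!
For `g` continuous on `[0, t + τ]` the convolution splits as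
`(T∗g)(t + τ) = T(τ) (T∗g)(t) + (T∗g(· + t))(τ)`. Splitting `[0, τ + h]` at `τ` and at `h`
shows that `Y = ∫₀^τ T(s)x ds` satisfies `T(h)Y - Y = (T(τ) - 1) ∫₀^h T(s)x ds`, and
`h⁻¹ ∫₀^h T(s)x ds → x`, so `Y ∈ D(A)`.
For (a), apply the hypothesis to `f` delayed by `r - t` and held at `f(0)` before: `(T∗Bf)(t)`
differs from the resulting element of `D(A)` by `T(t) ∫₀^{r-t} T(s)Bf(0) ds ∈ D(A)`.
For (b), times up to `r` follow from (a) after extending `f` constantly, and larger times by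
induction, splitting off a final piece of length `r`.

The Riemann integrals exist by sequential completeness: two Riemann sums of mesh `< δ` differ by
at most `(b - a)` times the oscillation of `f` over distances `2δ`, as both sums can be
redistributed over the overlaps of their subintervals.
-/

theorem Seminorm.map_sum_le {X : Type*} [AddCommGroup X] [Module ℝ X] (q : Seminorm ℝ X)
    {ι : Type*} (s : Finset ι) (f : ι → X) : q (∑ i ∈ s, f i) ≤ ∑ i ∈ s, q (f i) :=
  Finset.le_sum_of_subadditive q (map_zero q).le (map_add_le_add q) s f

section Seminorms

variable {X : Type*} [AddCommGroup X] [Module ℝ X] [TopologicalSpace X]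
  [IsTopologicalAddGroup X] [ContinuousSMul ℝ X] [LocallyConvexSpace ℝ X]

theorem tendsto_nhds_iff_seminorm {α : Type*} {l : Filter α} {F : α → X} {y : X} :
    Tendsto F l (𝓝 y) ↔
      ∀ q : Seminorm ℝ X, Continuous q → ∀ ε, 0 < ε → ∀ᶠ a in l, q (F a - y) < ε := by
  rw [(PolynormableSpace.withSeminorms ℝ X).tendsto_nhds, Subtype.forall]

theorem eq_of_forall_seminorm_sub_lt [T2Space X] {x y : X}
    (h : ∀ q : Seminorm ℝ X, Continuous q → ∀ ε, 0 < ε → q (x - y) < ε) : x = y := by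
  by_contra hxy
  obtain ⟨⟨q, hq⟩, hne⟩ :=
    (PolynormableSpace.withSeminorms ℝ X).separating_of_T1 (x - y) (sub_ne_zero.2 hxy)
  exact lt_irrefl _ (h q hq _ ((apply_nonneg q _).lt_of_ne' hne))

end Seminorms

section UniformSeminorms

variable {X : Type*} [AddCommGroup X] [Module ℝ X] [UniformSpace X] [IsUniformAddGroup X]

theorem UniformContinuousOn.exists_seminorm_sub_lt {α : Type*} [PseudoMetricSpace α]
    {s : Set α} {f : α → X} (hf : UniformContinuousOn f s) {q : Seminorm ℝ X}
    (hq : Continuous q) {ε : ℝ} (hε : 0 < ε) :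
    ∃ δ, 0 < δ ∧ ∀ x ∈ s, ∀ y ∈ s, dist x y < δ → q (f x - f y) < ε := by
  have hV : (fun p : X × X => p.2 - p.1) ⁻¹' {x | q x < ε} ∈ uniformity X := by
    rw [uniformity_eq_comap_nhds_zero]
    exact preimage_mem_comap ((isOpen_lt hq continuous_const).mem_nhds (by simpa using hε))
  obtain ⟨δ, hδ, H⟩ := (Metric.uniformity_basis_dist.uniformContinuousOn_iff
    (uniformity X).basis_sets).1 hf _ hV
  exact ⟨δ, hδ, fun x hx y hy hxy => map_sub_rev q (f x) (f y) ▸ H x hx y hy hxy⟩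

variable [ContinuousSMul ℝ X] [LocallyConvexSpace ℝ X]

theorem cauchySeq_of_seminorm {u : ℕ → X}
    (h : ∀ q : Seminorm ℝ X, Continuous q → ∀ ε, 0 < ε →
      ∃ N, ∀ m, N ≤ m → ∀ n, N ≤ n → q (u m - u n) < ε) : CauchySeq u := by
  rw [cauchySeq_iff_tendsto, uniformity_eq_comap_nhds_zero, tendsto_comap_iff]
  refine tendsto_nhds_iff_seminorm.2 fun q hq ε hε => ?_
  obtain ⟨N, hN⟩ := h q hq ε hε
  filter_upwards [mem_atTop (N, N)] with p hp
  simpa using hN p.2 hp.2 p.1 hp.1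

end UniformSeminorms

namespace IntervalPartition

variable {a b c : ℝ}

theorem points_le_points (d : IntervalPartition a b) {i j : ℕ} (hij : i ≤ j) (hj : j ≤ d.n) :
    d.points i ≤ d.points j := by
  induction j, hij using Nat.le_induction with
  | base => exact le_rfl
  | succ j _ ih => exact (ih (by omega)).trans (d.increasing j (by omega)).le

theorem points_mem_Icc (d : IntervalPartition a b) {i : ℕ} (hi : i ≤ d.n) :
    d.points i ∈ Icc a b := by
  have h₁ := d.points_le_points (Nat.zero_le i) hi
  have h₂ := d.points_le_points hi le_rfl
  rw [d.first_eq] at h₁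
  rw [d.last_eq] at h₂
  exact ⟨h₁, h₂⟩

theorem sum_sub_points (d : IntervalPartition a b) :
    ∑ i ∈ Finset.range d.n, (d.points (i + 1) - d.points i) = b - a := by
  rw [Finset.sum_range_sub, d.last_eq, d.first_eq]

def IsTagged (d : IntervalPartition a b) (τ : ℕ → ℝ) : Prop :=
  ∀ i, i < d.n → τ i ∈ Icc (d.points i) (d.points (i + 1))

def MeshLT (d : IntervalPartition a b) (δ : ℝ) : Prop :=
  ∀ i, i < d.n → d.points (i + 1) - d.points i < δ

theorem MeshLT.mono {δ δ' : ℝ} {d : IntervalPartition a b} (hd : d.MeshLT δ) (hδ : δ ≤ δ') :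
    d.MeshLT δ' :=
  fun i hi => (hd i hi).trans_le hδ

theorem IsTagged.mem_Icc {d : IntervalPartition a b} {τ : ℕ → ℝ} (hτ : d.IsTagged τ) {i : ℕ}
    (hi : i < d.n) : τ i ∈ Icc a b :=
  ⟨(d.points_mem_Icc hi.le).1.trans (hτ i hi).1, (hτ i hi).2.trans (d.points_mem_Icc hi).2⟩

noncomputable def uniform (hab : a < b) (k : ℕ) (hk : 0 < k) : IntervalPartition a b where
  n := k
  points i := a + i * ((b - a) / k)
  first_eq := by simp
  last_eq := by field_simp; ring
  increasing i _ := by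
    have : 0 < (b - a) / k := div_pos (sub_pos.2 hab) (Nat.cast_pos.2 hk)
    push_cast
    linarith

theorem exists_isTagged_meshLT (hab : a ≤ b) {δ : ℝ} (hδ : 0 < δ) :
    ∃ (d : IntervalPartition a b) (τ : ℕ → ℝ), d.MeshLT δ ∧ d.IsTagged τ := by
  rcases hab.eq_or_lt with rfl | hab
  · exact ⟨⟨0, fun _ => a, rfl, rfl, by simp⟩, fun _ => a, by simp [MeshLT], by simp [IsTagged]⟩
  obtain ⟨k, hk⟩ : ∃ k : ℕ, (b - a) / δ < k := exists_nat_gt _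
  have hk₀ : 0 < k := by exact_mod_cast (div_pos (sub_pos.2 hab) hδ).trans hk
  refine ⟨uniform hab k hk₀, (uniform hab k hk₀).points, fun i _ => ?_,
    fun i hi => ⟨le_rfl, ((uniform hab k hk₀).increasing i hi).le⟩⟩
  rw [div_lt_iff₀ hδ] at hk
  simp only [uniform]
  rw [show a + (↑(i + 1) : ℝ) * ((b - a) / k) - (a + i * ((b - a) / k)) = (b - a) / k by
    push_cast; ring, div_lt_iff₀ (by positivity)]
  linarith

def comapAddRight {t : ℝ} (d : IntervalPartition (a + t) (b + t)) : IntervalPartition a b where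
  n := d.n
  points i := d.points i - t
  first_eq := by simp [d.first_eq]
  last_eq := by simp [d.last_eq]
  increasing i hi := by simpa using d.increasing i hi

def append (d₁ : IntervalPartition a c) (d₂ : IntervalPartition c b) : IntervalPartition a b where
  n := d₁.n + d₂.n
  points i := if i ≤ d₁.n then d₁.points i else d₂.points (i - d₁.n)
  first_eq := by simp [d₁.first_eq]
  last_eq := by
    rcases Nat.eq_zero_or_pos d₂.n with h | h
    · simp [h, d₁.last_eq, ← d₂.last_eq, d₂.first_eq]
    · simp [show ¬ d₁.n + d₂.n ≤ d₁.n by omega, d₂.last_eq]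
  increasing i hi := by
    split_ifs with h₁ h₂ h₂
    · exact d₁.increasing i (by omega)
    · rw [show i = d₁.n by omega, d₁.last_eq.trans d₂.first_eq.symm, Nat.add_sub_cancel_left]
      exact d₂.increasing 0 (by omega)
    · omega
    · rw [show i + 1 - d₁.n = i - d₁.n + 1 by omega]
      exact d₂.increasing _ (by omega)

theorem points_append_of_le (d₁ : IntervalPartition a c) (d₂ : IntervalPartition c b) {i : ℕ}
    (hi : i ≤ d₁.n) : (d₁.append d₂).points i = d₁.points i :=
  if_pos hi

theorem points_append_add (d₁ : IntervalPartition a c) (d₂ : IntervalPartition c b) (j : ℕ) :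
    (d₁.append d₂).points (d₁.n + j) = d₂.points j := by
  rcases Nat.eq_zero_or_pos j with rfl | hj
  · rw [add_zero, points_append_of_le _ _ le_rfl, d₁.last_eq, d₂.first_eq]
  · exact (if_neg (by omega)).trans (by rw [Nat.add_sub_cancel_left])

theorem MeshLT.append {d₁ : IntervalPartition a c} {d₂ : IntervalPartition c b} {δ : ℝ}
    (hd₁ : d₁.MeshLT δ) (hd₂ : d₂.MeshLT δ) : (d₁.append d₂).MeshLT δ := by
  intro i hi
  change i < d₁.n + d₂.n at hi
  rcases lt_or_ge i d₁.n with h | h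
  · rw [points_append_of_le _ _ h, points_append_of_le _ _ h.le]
    exact hd₁ i h
  · obtain ⟨j, rfl⟩ := Nat.exists_eq_add_of_le h
    rw [add_assoc, points_append_add, points_append_add]
    exact hd₂ j (by omega)

theorem IsTagged.append {d₁ : IntervalPartition a c} {d₂ : IntervalPartition c b}
    {τ₁ τ₂ : ℕ → ℝ} (hτ₁ : d₁.IsTagged τ₁) (hτ₂ : d₂.IsTagged τ₂) :
    (d₁.append d₂).IsTagged (fun i => if i < d₁.n then τ₁ i else τ₂ (i - d₁.n)) := by
  intro i hi
  change i < d₁.n + d₂.n at hi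
  rcases lt_or_ge i d₁.n with h | h
  · dsimp only
    rw [points_append_of_le _ _ h, points_append_of_le _ _ h.le, if_pos h]
    exact hτ₁ i h
  · obtain ⟨j, rfl⟩ := Nat.exists_eq_add_of_le h
    dsimp only
    rw [add_assoc, points_append_add, points_append_add, if_neg (by omega),
      Nat.add_sub_cancel_left]
    exact hτ₂ j (by omega)

end IntervalPartition

def intervalOverlap (u v x y : ℝ) : ℝ := max 0 (min v y - max u x)

theorem intervalOverlap_comm (u v x y : ℝ) :
    intervalOverlap u v x y = intervalOverlap x y u v := by
  simp only [intervalOverlap, min_comm v y, max_comm u x]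

theorem intervalOverlap_nonneg (u v x y : ℝ) : 0 ≤ intervalOverlap u v x y :=
  le_max_left _ _

theorem intervalOverlap_eq_sub {u v x y : ℝ} (huv : u ≤ v) (hxy : x ≤ y) :
    intervalOverlap u v x y = max u (min y v) - max u (min x v) := by
  simp only [intervalOverlap, max_def, min_def]
  split_ifs <;> linarith

theorem abs_sub_le_of_intervalOverlap_ne_zero {u v x y s t : ℝ}
    (h : intervalOverlap u v x y ≠ 0) (hs : s ∈ Icc u v) (ht : t ∈ Icc x y) :
    |s - t| ≤ (v - u) + (y - x) := by
  have hpos : 0 < min v y - max u x := by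
    by_contra! hle
    exact h (max_eq_left hle)
  rw [abs_sub_le_iff]
  constructor <;> linarith [hs.1, hs.2, ht.1, ht.2, min_le_left v y, min_le_right v y,
    le_max_left u x, le_max_right u x]

namespace IntervalPartition

variable {a b c : ℝ}

theorem sum_intervalOverlap (d : IntervalPartition a b) {u v : ℝ} (hu : a ≤ u) (huv : u ≤ v)
    (hv : v ≤ b) :
    ∑ j ∈ Finset.range d.n, intervalOverlap u v (d.points j) (d.points (j + 1)) = v - u := by
  rw [Finset.sum_congr rfl fun j hj =>
      intervalOverlap_eq_sub huv (d.increasing j (Finset.mem_range.1 hj)).le,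
    Finset.sum_range_sub (fun j => max u (min (d.points j) v)), d.last_eq, d.first_eq,
    min_eq_right hv, max_eq_right huv, min_eq_left (hu.trans huv), max_eq_left hu]

variable {X : Type*} [AddCommGroup X] [Module ℝ X]

def riemannSum (d : IntervalPartition a b) (τ : ℕ → ℝ) (f : ℝ → X) : X :=
  ∑ i ∈ Finset.range d.n, (d.points (i + 1) - d.points i) • f (τ i)

theorem riemannSum_congr {d : IntervalPartition a b} {τ : ℕ → ℝ} (hτ : d.IsTagged τ)
    {f g : ℝ → X} (hfg : EqOn f g (Icc a b)) : d.riemannSum τ f = d.riemannSum τ g :=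
  Finset.sum_congr rfl fun i hi => by rw [hfg (hτ.mem_Icc (Finset.mem_range.1 hi))]

theorem map_riemannSum {Y F : Type*} [AddCommGroup Y] [Module ℝ Y] [FunLike F X Y]
    [LinearMapClass F ℝ X Y] (L : F) (d : IntervalPartition a b) (τ : ℕ → ℝ) (f : ℝ → X) :
    L (d.riemannSum τ f) = d.riemannSum τ (fun s => L (f s)) := by
  simp only [riemannSum, map_sum, map_smul]

theorem riemannSum_sub_smul (d : IntervalPartition a b) (τ : ℕ → ℝ) (f : ℝ → X) (v : X) :
    d.riemannSum τ f - (b - a) • v = d.riemannSum τ (fun s => f s - v) := by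
  simp only [riemannSum, smul_sub, Finset.sum_sub_distrib, ← Finset.sum_smul, d.sum_sub_points]

theorem seminorm_riemannSum_le (q : Seminorm ℝ X) {f : ℝ → X} {M : ℝ}
    (hM : ∀ s ∈ Icc a b, q (f s) ≤ M) {d : IntervalPartition a b} {τ : ℕ → ℝ}
    (hτ : d.IsTagged τ) : q (d.riemannSum τ f) ≤ (b - a) * M := by
  calc q (d.riemannSum τ f)
      ≤ ∑ i ∈ Finset.range d.n, (d.points (i + 1) - d.points i) * M := by
        refine (q.map_sum_le _ _).trans (Finset.sum_le_sum fun i hi => ?_)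
        have hi := Finset.mem_range.1 hi
        have hgap := sub_nonneg.2 (d.increasing i hi).le
        rw [map_smul_eq_mul, Real.norm_of_nonneg hgap]
        exact mul_le_mul_of_nonneg_left (hM _ (hτ.mem_Icc hi)) hgap
    _ = (b - a) * M := by rw [← Finset.sum_mul, d.sum_sub_points]

theorem riemannSum_comapAddRight {t : ℝ} (d : IntervalPartition (a + t) (b + t)) (τ : ℕ → ℝ)
    (f : ℝ → X) :
    d.comapAddRight.riemannSum (fun i => τ i - t) (fun s => f (s + t)) = d.riemannSum τ f := by
  simp [riemannSum, comapAddRight]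

theorem IsTagged.comapAddRight {t : ℝ} {d : IntervalPartition (a + t) (b + t)} {τ : ℕ → ℝ}
    (hτ : d.IsTagged τ) : d.comapAddRight.IsTagged (fun i => τ i - t) := fun i hi =>
  ⟨sub_le_sub_right (hτ i hi).1 t, sub_le_sub_right (hτ i hi).2 t⟩

theorem MeshLT.comapAddRight {t δ : ℝ} {d : IntervalPartition (a + t) (b + t)}
    (hd : d.MeshLT δ) : d.comapAddRight.MeshLT δ := fun i hi => by
  simpa [IntervalPartition.comapAddRight] using hd i hi

theorem riemannSum_append {d₁ : IntervalPartition a c} {d₂ : IntervalPartition c b}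
    (τ₁ τ₂ : ℕ → ℝ) (f : ℝ → X) :
    (d₁.append d₂).riemannSum (fun i => if i < d₁.n then τ₁ i else τ₂ (i - d₁.n)) f =
      d₁.riemannSum τ₁ f + d₂.riemannSum τ₂ f := by
  rw [riemannSum, show (d₁.append d₂).n = d₁.n + d₂.n from rfl, Finset.sum_range_add]
  congr 1 <;> refine Finset.sum_congr rfl fun i hi => ?_
  · have hi := Finset.mem_range.1 hi
    rw [points_append_of_le _ _ hi, points_append_of_le _ _ hi.le, if_pos hi]
  · rw [add_assoc, points_append_add, points_append_add, if_neg (by omega),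
      Nat.add_sub_cancel_left]

theorem seminorm_riemannSum_sub_le (q : Seminorm ℝ X) {f : ℝ → X} {δ η : ℝ}
    (hf : ∀ s ∈ Icc a b, ∀ t ∈ Icc a b, |s - t| < 2 * δ → q (f s - f t) ≤ η)
    {d d' : IntervalPartition a b} {τ τ' : ℕ → ℝ} (hd : d.MeshLT δ) (hd' : d'.MeshLT δ)
    (hτ : d.IsTagged τ) (hτ' : d'.IsTagged τ') :
    q (d.riemannSum τ f - d'.riemannSum τ' f) ≤ (b - a) * η := by
  set w : ℕ → ℕ → ℝ := fun i j =>
    intervalOverlap (d.points i) (d.points (i + 1)) (d'.points j) (d'.points (j + 1))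
  have hrow : ∀ i ∈ Finset.range d.n, ∑ j ∈ Finset.range d'.n, w i j
      = d.points (i + 1) - d.points i := fun i hi =>
    have hi := Finset.mem_range.1 hi
    d'.sum_intervalOverlap (d.points_mem_Icc hi.le).1 (d.increasing i hi).le
      (d.points_mem_Icc hi).2
  have hcol : ∀ j ∈ Finset.range d'.n, ∑ i ∈ Finset.range d.n, w i j
      = d'.points (j + 1) - d'.points j := fun j hj => by
    have hj := Finset.mem_range.1 hj
    simp only [w, intervalOverlap_comm _ _ (d'.points j)]
    exact d.sum_intervalOverlap (d'.points_mem_Icc hj.le).1 (d'.increasing j hj).le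
      (d'.points_mem_Icc hj).2
  have hdiff : d.riemannSum τ f - d'.riemannSum τ' f
      = ∑ i ∈ Finset.range d.n, ∑ j ∈ Finset.range d'.n, w i j • (f (τ i) - f (τ' j)) := by
    simp only [smul_sub, Finset.sum_sub_distrib]
    rw [Finset.sum_comm (f := fun i j => w i j • f (τ' j))]
    congr 1 <;> refine Finset.sum_congr rfl fun i hi => ?_
    · rw [← Finset.sum_smul, hrow i hi]
    · rw [← Finset.sum_smul, hcol i hi]
  have hterm : ∀ i ∈ Finset.range d.n, ∀ j ∈ Finset.range d'.n,
      q (w i j • (f (τ i) - f (τ' j))) ≤ w i j * η := by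
    intro i hi j hj
    have hi := Finset.mem_range.1 hi
    have hj := Finset.mem_range.1 hj
    rcases eq_or_ne (w i j) 0 with h | h
    · rw [h, zero_smul, map_zero, zero_mul]
    rw [map_smul_eq_mul, Real.norm_of_nonneg (intervalOverlap_nonneg _ _ _ _)]
    refine mul_le_mul_of_nonneg_left (hf _ (hτ.mem_Icc hi) _ (hτ'.mem_Icc hj) ?_)
      (intervalOverlap_nonneg _ _ _ _)
    linarith [abs_sub_le_of_intervalOverlap_ne_zero h (hτ i hi) (hτ' j hj), hd i hi, hd' j hj]
  calc q (d.riemannSum τ f - d'.riemannSum τ' f)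
      ≤ ∑ i ∈ Finset.range d.n, ∑ j ∈ Finset.range d'.n, q (w i j • (f (τ i) - f (τ' j))) := by
        rw [hdiff]
        exact (q.map_sum_le _ _).trans (Finset.sum_le_sum fun i _ => q.map_sum_le _ _)
    _ ≤ ∑ i ∈ Finset.range d.n, ∑ j ∈ Finset.range d'.n, w i j * η :=
        Finset.sum_le_sum fun i hi => Finset.sum_le_sum fun j hj => hterm i hi j hj
    _ = (b - a) * η := by
        simp only [← Finset.sum_mul]
        rw [Finset.sum_congr rfl hrow, d.sum_sub_points]

end IntervalPartition

section RiemannIntegral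

open IntervalPartition

variable {X : Type*} [AddCommGroup X] [Module ℝ X] [UniformSpace X] {a b c : ℝ} {f g : ℝ → X}
  {y : X}

theorem isRiemannIntegral_iff : IsRiemannIntegral f a b y ↔
    ∀ q : Seminorm ℝ X, Continuous q → ∀ ε, 0 < ε → ∃ δ, 0 < δ ∧
      ∀ (d : IntervalPartition a b) (τ : ℕ → ℝ), d.MeshLT δ → d.IsTagged τ →
        q (d.riemannSum τ f - y) < ε :=
  Iff.rfl

theorem IsRiemannIntegral.congr (h : IsRiemannIntegral f a b y) (hfg : EqOn f g (Icc a b)) :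
    IsRiemannIntegral g a b y := by
  rw [isRiemannIntegral_iff] at h ⊢
  intro q hq ε hε
  obtain ⟨δ, hδ, H⟩ := h q hq ε hε
  exact ⟨δ, hδ, fun d τ hd hτ => riemannSum_congr hτ hfg ▸ H d τ hd hτ⟩

theorem riemannIntegral_congr (hfg : EqOn f g (Icc a b)) :
    riemannIntegral f a b = riemannIntegral g a b := by
  have : IsRiemannIntegral f a b = IsRiemannIntegral g a b :=
    funext fun _ => propext ⟨fun h => h.congr hfg, fun h => h.congr hfg.symm⟩
  rw [riemannIntegral, riemannIntegral, this]

theorem IsRiemannIntegral.comp_add_right {t : ℝ}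
    (h : IsRiemannIntegral (fun s => f (s + t)) a b y) :
    IsRiemannIntegral f (a + t) (b + t) y := by
  rw [isRiemannIntegral_iff] at h ⊢
  intro q hq ε hε
  obtain ⟨δ, hδ, H⟩ := h q hq ε hε
  refine ⟨δ, hδ, fun d τ hd hτ => ?_⟩
  rw [← d.riemannSum_comapAddRight]
  exact H _ _ hd.comapAddRight hτ.comapAddRight

theorem IsRiemannIntegral.map {Y : Type*} [AddCommGroup Y] [Module ℝ Y] [UniformSpace Y]
    (L : X →L[ℝ] Y) (h : IsRiemannIntegral f a b y) :
    IsRiemannIntegral (fun s => L (f s)) a b (L y) := by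
  rw [isRiemannIntegral_iff] at h ⊢
  intro q hq ε hε
  obtain ⟨δ, hδ, H⟩ := h (q.comp L.toLinearMap) (hq.comp L.continuous) ε hε
  refine ⟨δ, hδ, fun d τ hd hτ => ?_⟩
  rw [← map_riemannSum, ← map_sub]
  exact H d τ hd hτ

theorem IsRiemannIntegral.seminorm_sub_smul_le (hab : a ≤ b) (h : IsRiemannIntegral f a b y)
    {q : Seminorm ℝ X} (hq : Continuous q) {v : X} {M : ℝ}
    (hM : ∀ s ∈ Icc a b, q (f s - v) ≤ M) : q (y - (b - a) • v) ≤ (b - a) * M := by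
  rw [isRiemannIntegral_iff] at h
  refine le_of_forall_pos_lt_add fun ε hε => ?_
  obtain ⟨δ, hδ, H⟩ := h q hq ε hε
  obtain ⟨d, τ, hd, hτ⟩ := exists_isTagged_meshLT hab hδ
  have hS := d.seminorm_riemannSum_le q hM hτ
  rw [← d.riemannSum_sub_smul] at hS
  calc q (y - (b - a) • v)
      = q ((d.riemannSum τ f - (b - a) • v) - (d.riemannSum τ f - y)) := by congr 1; abel
    _ ≤ q (d.riemannSum τ f - (b - a) • v) + q (d.riemannSum τ f - y) := map_sub_le_add q _ _
    _ < (b - a) * M + ε := by linarith [H d τ hd hτ]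

variable [IsUniformAddGroup X]

theorem ContinuousOn.exists_seminorm_riemannSum_sub_lt (hf : ContinuousOn f (Icc a b))
    {q : Seminorm ℝ X} (hq : Continuous q) {ε : ℝ} (hε : 0 < ε) :
    ∃ δ, 0 < δ ∧ ∀ (d d' : IntervalPartition a b) (τ τ' : ℕ → ℝ), d.MeshLT δ → d'.MeshLT δ →
      d.IsTagged τ → d'.IsTagged τ' → q (d.riemannSum τ f - d'.riemannSum τ' f) < ε := by
  have hη : 0 < ε / (|b - a| + 1) := by positivity
  obtain ⟨δ, hδ, H⟩ :=
    (isCompact_Icc.uniformContinuousOn_of_continuous hf).exists_seminorm_sub_lt hq hη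
  refine ⟨δ / 2, half_pos hδ, fun d d' τ τ' hd hd' hτ hτ' => ?_⟩
  calc q (d.riemannSum τ f - d'.riemannSum τ' f) ≤ (b - a) * (ε / (|b - a| + 1)) :=
        seminorm_riemannSum_sub_le q (fun s hs t ht hst => (H s hs t ht (by
          rw [Real.dist_eq]; linarith)).le) hd hd' hτ hτ'
    _ < ε := by
        rw [mul_div_assoc', div_lt_iff₀ (by positivity)]
        nlinarith [le_abs_self (b - a)]

variable [ContinuousSMul ℝ X] [LocallyConvexSpace ℝ X]

theorem exists_isRiemannIntegral (hX : SequentiallyComplete X) (hab : a ≤ b)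
    (hf : ContinuousOn f (Icc a b)) : ∃ y, IsRiemannIntegral f a b y := by
  choose D Τ hD hΤ using fun n : ℕ => exists_isTagged_meshLT hab (Nat.one_div_pos_of_nat (n := n))
  have hfine : ∀ δ, 0 < δ → ∃ N, ∀ n, N ≤ n → (D n).MeshLT δ := fun δ hδ => by
    obtain ⟨N, hN⟩ := exists_nat_one_div_lt hδ
    exact ⟨N, fun n hn => (hD n).mono ((Nat.one_div_le_one_div hn).trans hN.le)⟩
  obtain ⟨y, hy⟩ := hX (fun n => (D n).riemannSum (Τ n) f) <| cauchySeq_of_seminorm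
    fun q hq ε hε => by
      obtain ⟨δ, hδ, H⟩ := hf.exists_seminorm_riemannSum_sub_lt hq hε
      obtain ⟨N, hN⟩ := hfine δ hδ
      exact ⟨N, fun m hm n hn => H _ _ _ _ (hN m hm) (hN n hn) (hΤ m) (hΤ n)⟩
  refine ⟨y, isRiemannIntegral_iff.2 fun q hq ε hε => ?_⟩
  obtain ⟨δ, hδ, H⟩ := hf.exists_seminorm_riemannSum_sub_lt hq (half_pos hε)
  obtain ⟨N, hN⟩ := hfine δ hδ
  refine ⟨δ, hδ, fun d τ hd hτ => ?_⟩
  have hlim : Tendsto (fun n => q (d.riemannSum τ f - (D n).riemannSum (Τ n) f)) atTop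
      (𝓝 (q (d.riemannSum τ f - y))) :=
    (hq.tendsto _).comp (tendsto_const_nhds.sub hy)
  have hle : q (d.riemannSum τ f - y) ≤ ε / 2 := le_of_tendsto hlim
    (eventually_atTop.2 ⟨N, fun n hn => (H _ _ _ _ hd (hN n hn) hτ (hΤ n)).le⟩)
  linarith

variable [T2Space X]

theorem IsRiemannIntegral.unique (hab : a ≤ b) {z : X} (hy : IsRiemannIntegral f a b y)
    (hz : IsRiemannIntegral f a b z) : y = z := by
  rw [isRiemannIntegral_iff] at hy hz
  refine eq_of_forall_seminorm_sub_lt fun q hq ε hε => ?_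
  obtain ⟨δ₁, hδ₁, H₁⟩ := hy q hq (ε / 2) (half_pos hε)
  obtain ⟨δ₂, hδ₂, H₂⟩ := hz q hq (ε / 2) (half_pos hε)
  obtain ⟨d, τ, hd, hτ⟩ := exists_isTagged_meshLT hab (lt_min hδ₁ hδ₂)
  have e₁ := H₁ d τ (hd.mono (min_le_left _ _)) hτ
  have e₂ := H₂ d τ (hd.mono (min_le_right _ _)) hτ
  calc q (y - z) = q ((d.riemannSum τ f - z) - (d.riemannSum τ f - y)) := by congr 1; abel
    _ ≤ q (d.riemannSum τ f - z) + q (d.riemannSum τ f - y) := map_sub_le_add q _ _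
    _ < ε := by linarith

theorem riemannIntegral_eq (hab : a ≤ b) (h : IsRiemannIntegral f a b y) :
    riemannIntegral f a b = y := by
  have hex : ∃ z, IsRiemannIntegral f a b z := ⟨y, h⟩
  rw [riemannIntegral, dif_pos hex]
  exact hex.choose_spec.unique hab h

theorem IsRiemannIntegral.eq_add_of_adjacent (hac : a ≤ c) (hcb : c ≤ b) {y₁ y₂ : X}
    (h₁ : IsRiemannIntegral f a c y₁) (h₂ : IsRiemannIntegral f c b y₂)
    (h : IsRiemannIntegral f a b y) : y = y₁ + y₂ := by
  rw [isRiemannIntegral_iff] at h₁ h₂ h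
  refine eq_of_forall_seminorm_sub_lt fun q hq ε hε => ?_
  obtain ⟨δ, hδ, H⟩ := h q hq (ε / 3) (by positivity)
  obtain ⟨δ₁, hδ₁, H₁⟩ := h₁ q hq (ε / 3) (by positivity)
  obtain ⟨δ₂, hδ₂, H₂⟩ := h₂ q hq (ε / 3) (by positivity)
  have hδ' : 0 < min δ (min δ₁ δ₂) := lt_min hδ (lt_min hδ₁ hδ₂)
  obtain ⟨d₁, τ₁, hd₁, hτ₁⟩ := exists_isTagged_meshLT hac hδ'
  obtain ⟨d₂, τ₂, hd₂, hτ₂⟩ := exists_isTagged_meshLT hcb hδ'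
  have e := H _ _ ((hd₁.append hd₂).mono (min_le_left _ _)) (hτ₁.append hτ₂)
  rw [riemannSum_append] at e
  have e₁ := H₁ d₁ τ₁ (hd₁.mono ((min_le_right _ _).trans (min_le_left _ _))) hτ₁
  have e₂ := H₂ d₂ τ₂ (hd₂.mono ((min_le_right _ _).trans (min_le_right _ _))) hτ₂
  set S₁ := d₁.riemannSum τ₁ f
  set S₂ := d₂.riemannSum τ₂ f
  calc q (y - (y₁ + y₂)) = q ((S₁ - y₁) + (S₂ - y₂) - (S₁ + S₂ - y)) := by congr 1; abel
    _ ≤ q (S₁ - y₁) + q (S₂ - y₂) + q (S₁ + S₂ - y) :=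
        (map_sub_le_add q _ _).trans (add_le_add_left (map_add_le_add q _ _) _)
    _ < ε := by linarith

end RiemannIntegral

section Semigroup

variable {X : Type*} [AddCommGroup X] [Module ℝ X] [UniformSpace X] {T : ℝ → X →L[ℝ] X}

theorem IsSCLESemigroup.apply_add (hT : IsSCLESemigroup T) {s t : ℝ} (hs : 0 ≤ s) (ht : 0 ≤ t)
    (x : X) : T (s + t) x = T s (T t x) := by
  rw [hT.2.1 s t hs ht]
  rfl

theorem IsSCLESemigroup.apply_comm (hT : IsSCLESemigroup T) {s t : ℝ} (hs : 0 ≤ s) (ht : 0 ≤ t)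
    (x : X) : T s (T t x) = T t (T s x) := by
  rw [← hT.apply_add hs ht, ← hT.apply_add ht hs, add_comm]

theorem sgConv_congr {g g' : ℝ → X} {t : ℝ} (hgg' : EqOn g g' (Icc 0 t)) :
    sgConv T g t = sgConv T g' t :=
  riemannIntegral_congr fun s hs => by simp only [hgg' hs]

theorem IsSCLESemigroup.apply_mem_genDomain (hT : IsSCLESemigroup T) {t : ℝ} (ht : 0 ≤ t)
    {x : X} (hx : x ∈ genDomain T) : T t x ∈ genDomain T := by
  obtain ⟨y, hy⟩ := hx
  refine ⟨T t y, (((T t).continuous.tendsto y).comp hy).congr' ?_⟩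
  filter_upwards [self_mem_nhdsWithin] with h (hh : 0 < h)
  simp only [Function.comp, map_smul, map_sub, hT.apply_comm hh.le ht]

variable [IsUniformAddGroup X]

theorem genDomain_add {x y : X} (hx : x ∈ genDomain T) (hy : y ∈ genDomain T) :
    x + y ∈ genDomain T := by
  obtain ⟨x', hx'⟩ := hx
  obtain ⟨y', hy'⟩ := hy
  refine ⟨x' + y', (hx'.add hy').congr fun t => ?_⟩
  rw [← smul_add, map_add, add_sub_add_comm]

theorem genDomain_sub {x y : X} (hx : x ∈ genDomain T) (hy : y ∈ genDomain T) :
    x - y ∈ genDomain T := by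
  obtain ⟨x', hx'⟩ := hx
  obtain ⟨y', hy'⟩ := hy
  refine ⟨x' - y', (hx'.sub hy').congr fun t => ?_⟩
  rw [← smul_sub, map_sub, sub_sub_sub_comm]

variable [ContinuousSMul ℝ X] [LocallyConvexSpace ℝ X]

theorem IsSCLESemigroup.continuousOn_apply (hT : IsSCLESemigroup T) :
    ContinuousOn (fun p : ℝ × X => T p.1 p.2) (Ici 0 ×ˢ univ) := by
  rintro ⟨s₀, x₀⟩ ⟨hs₀, -⟩
  refine tendsto_nhds_iff_seminorm.2 fun q hq ε hε => ?_
  obtain ⟨p, hp, C, -, hbound⟩ := hT.2.2.2 q hq (s₀ + 1) (by linarith [mem_Ici.1 hs₀])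
  have hnear : ∀ᶠ z in 𝓝[Ici 0 ×ˢ univ] (s₀, x₀), z.1 ∈ Icc 0 (s₀ + 1) := by
    filter_upwards [self_mem_nhdsWithin, nhdsWithin_le_nhds
      ((continuous_fst.tendsto (s₀, x₀)) (Iio_mem_nhds (lt_add_one s₀)))] with z hz hz'
    exact ⟨hz.1, le_of_lt hz'⟩
  -- local equicontinuity controls the change of `x`, strong continuity the change of `s`
  have hx : ∀ᶠ z in 𝓝[Ici 0 ×ˢ univ] (s₀, x₀), C * p (z.2 - x₀) < ε / 2 := by
    have : Tendsto (fun z : ℝ × X => C * p (z.2 - x₀)) (𝓝 (s₀, x₀)) (𝓝 (C * p (x₀ - x₀))) :=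
      ((continuous_const.mul (hp.comp (continuous_snd.sub continuous_const))).tendsto _)
    rw [sub_self, map_zero, mul_zero] at this
    exact nhdsWithin_le_nhds (this (Iio_mem_nhds (half_pos hε)))
  have hs : ∀ᶠ z in 𝓝[Ici 0 ×ˢ univ] (s₀, x₀), q (T z.1 x₀ - T s₀ x₀) < ε / 2 :=
    tendsto_nhds_iff_seminorm.1 ((hT.2.2.1 x₀ s₀ hs₀).tendsto.comp
      (continuous_fst.continuousWithinAt.tendsto_nhdsWithin mapsTo_fst_prod)) q hq _
      (half_pos hε)
  filter_upwards [hnear, hx, hs] with z hz₁ hz₂ hz₃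
  calc q (T z.1 z.2 - T s₀ x₀) = q (T z.1 (z.2 - x₀) + (T z.1 x₀ - T s₀ x₀)) := by
        congr 1; rw [map_sub]; abel
    _ ≤ q (T z.1 (z.2 - x₀)) + q (T z.1 x₀ - T s₀ x₀) := map_add_le_add q _ _
    _ < ε := by linarith [hbound z.1 hz₁ (z.2 - x₀)]

theorem IsSCLESemigroup.continuousOn_apply_sub (hT : IsSCLESemigroup T) {g : ℝ → X} {t : ℝ}
    (hg : ContinuousOn g (Icc 0 t)) : ContinuousOn (fun s => T (t - s) (g s)) (Icc 0 t) :=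
  hT.continuousOn_apply.comp ((continuousOn_const.sub continuousOn_id).prodMk hg)
    fun _ hs => ⟨sub_nonneg.2 hs.2, trivial⟩

variable [T2Space X]

theorem IsSCLESemigroup.isRiemannIntegral_sgConv (hX : SequentiallyComplete X)
    (hT : IsSCLESemigroup T) {g : ℝ → X} {t : ℝ} (ht : 0 ≤ t) (hg : ContinuousOn g (Icc 0 t)) :
    IsRiemannIntegral (fun s => T (t - s) (g s)) 0 t (sgConv T g t) := by
  obtain ⟨y, hy⟩ := exists_isRiemannIntegral hX ht (hT.continuousOn_apply_sub hg)
  rwa [sgConv, riemannIntegral_eq ht hy]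

theorem IsSCLESemigroup.sgConv_add (hX : SequentiallyComplete X) (hT : IsSCLESemigroup T)
    {g : ℝ → X} {t τ : ℝ} (ht : 0 ≤ t) (hτ : 0 ≤ τ) (hg : ContinuousOn g (Icc 0 (t + τ))) :
    sgConv T g (t + τ) = T τ (sgConv T g t) + sgConv T (fun s => g (s + t)) τ := by
  have h₁ : IsRiemannIntegral (fun s => T (t + τ - s) (g s)) 0 t (T τ (sgConv T g t)) :=
    ((hT.isRiemannIntegral_sgConv hX ht (hg.mono (Icc_subset_Icc_right (by linarith)))).map
      (T τ)).congr fun s hs => by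
        dsimp only
        rw [← hT.apply_add hτ (sub_nonneg.2 hs.2), add_sub_assoc', add_comm τ t]
  have h₂ : IsRiemannIntegral (fun s => T (t + τ - s) (g s)) t (t + τ)
      (sgConv T (fun s => g (s + t)) τ) := by
    have hg' : ContinuousOn (fun s => g (s + t)) (Icc 0 τ) :=
      hg.comp (continuousOn_id.add continuousOn_const) fun s hs =>
        ⟨by linarith [hs.1], by linarith [hs.2]⟩
    have h : IsRiemannIntegral (fun s => (fun s => T (t + τ - s) (g s)) (s + t)) 0 τ
        (sgConv T (fun s => g (s + t)) τ) :=
      (hT.isRiemannIntegral_sgConv hX hτ hg').congr fun s _ => by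
        simp only [show t + τ - (s + t) = τ - s by ring]
    have := IsRiemannIntegral.comp_add_right (f := fun s => T (t + τ - s) (g s)) h
    rwa [zero_add, add_comm τ t] at this
  exact IsRiemannIntegral.eq_add_of_adjacent ht (le_add_of_nonneg_right hτ) h₁ h₂
    (hT.isRiemannIntegral_sgConv hX (add_nonneg ht hτ) hg)

theorem IsSCLESemigroup.tendsto_inv_smul_sgConv_const (hX : SequentiallyComplete X)
    (hT : IsSCLESemigroup T) (x : X) :
    Tendsto (fun h => h⁻¹ • sgConv T (fun _ => x) h) (𝓝[>] 0) (𝓝 x) := by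
  refine tendsto_nhds_iff_seminorm.2 fun q hq ε hε => ?_
  have hcont : Tendsto (fun σ => T σ x) (𝓝[≥] 0) (𝓝 x) := by
    simpa [hT.1] using (hT.2.2.1 x 0 self_mem_Ici).tendsto
  obtain ⟨η, hη, hsub⟩ := mem_nhdsGE_iff_exists_Ico_subset.1
    (tendsto_nhds_iff_seminorm.1 hcont q hq (ε / 2) (half_pos hε))
  filter_upwards [Ioo_mem_nhdsGT hη] with h ⟨hh, hhη⟩
  have hbound := (hT.isRiemannIntegral_sgConv hX hh.le continuousOn_const).seminorm_sub_smul_le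
    hh.le hq (v := x) (M := ε / 2) fun s hs =>
      (hsub ⟨sub_nonneg.2 hs.2, by linarith [hs.1]⟩).le
  rw [sub_zero] at hbound
  calc q (h⁻¹ • sgConv T (fun _ => x) h - x)
      = q (h⁻¹ • (sgConv T (fun _ => x) h - h • x)) := by
        rw [smul_sub, smul_smul, inv_mul_cancel₀ hh.ne', one_smul]
    _ = h⁻¹ * q (sgConv T (fun _ => x) h - h • x) := by
        rw [map_smul_eq_mul, Real.norm_of_nonneg (inv_nonneg.2 hh.le)]
    _ ≤ h⁻¹ * (h * (ε / 2)) := mul_le_mul_of_nonneg_left hbound (inv_nonneg.2 hh.le)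
    _ < ε := by rw [inv_mul_cancel_left₀ hh.ne']; linarith

theorem IsSCLESemigroup.sgConv_const_mem_genDomain (hX : SequentiallyComplete X)
    (hT : IsSCLESemigroup T) (x : X) {τ : ℝ} (hτ : 0 ≤ τ) :
    sgConv T (fun _ => x) τ ∈ genDomain T := by
  refine ⟨T τ x - x, ?_⟩
  have hlim := hT.tendsto_inv_smul_sgConv_const hX x
  refine ((((T τ).continuous.tendsto x).comp hlim).sub hlim).congr' ?_
  filter_upwards [self_mem_nhdsWithin] with h (hh : 0 < h)
  have e₁ := hT.sgConv_add hX hτ hh.le (g := fun _ => x) continuousOn_const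
  have e₂ := hT.sgConv_add hX hh.le hτ (g := fun _ => x) continuousOn_const
  rw [add_comm h τ] at e₂
  simp only [Function.comp, map_smul, ← smul_sub]
  congr 1
  rw [sub_eq_sub_iff_add_eq_add, ← e₂, e₁]

end Semigroup

section Regularity

variable {X U : Type*} [AddCommGroup X] [Module ℝ X] [UniformSpace X] [IsUniformAddGroup X]
  [ContinuousSMul ℝ X] [LocallyConvexSpace ℝ X] [T2Space X] [AddCommGroup U] [Module ℝ U]
  [UniformSpace U] {T : ℝ → X →L[ℝ] X} {B : U →L[ℝ] X}

theorem IsSCLESemigroup.sgConv_mem_genDomain_of_mem_Icc (hX : SequentiallyComplete X)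
    (hT : IsSCLESemigroup T) {r : ℝ} (hr : 0 ≤ r)
    (hB : ∀ f : ℝ → U, ContinuousOn f (Icc 0 r) → sgConv T (fun s => B (f s)) r ∈ genDomain T)
    {f : ℝ → U} (hf : ContinuousOn f (Icc 0 r)) {t : ℝ} (ht : t ∈ Icc 0 r) :
    sgConv T (fun s => B (f s)) t ∈ genDomain T := by
  obtain ⟨ht₀, htr⟩ := ht
  set g : ℝ → U := fun s => f (max 0 (s - (r - t)))
  have hg : ContinuousOn g (Icc 0 r) :=
    hf.comp (continuous_const.max (continuous_id.sub continuous_const)).continuousOn fun s hs =>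
      ⟨le_max_left _ _, max_le hr (by linarith [hs.2])⟩
  have hsplit := hT.sgConv_add hX (sub_nonneg.2 htr) ht₀ (g := fun s => B (g s))
    (by rw [sub_add_cancel]; exact B.continuous.comp_continuousOn hg)
  rw [sub_add_cancel] at hsplit
  have hconst : sgConv T (fun s => B (g s)) (r - t) = sgConv T (fun _ => B (f 0)) (r - t) :=
    sgConv_congr fun s hs => by simp [g, max_eq_left (by linarith [hs.2] : s - (r - t) ≤ 0)]
  have hshift : sgConv T (fun s => B (g (s + (r - t)))) t = sgConv T (fun s => B (f s)) t :=
    sgConv_congr fun s hs => by simp [g, max_eq_right hs.1]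
  rw [← hshift, eq_sub_of_add_eq' hsplit.symm, hconst]
  exact genDomain_sub (hB g hg)
    (hT.apply_mem_genDomain ht₀ (hT.sgConv_const_mem_genDomain hX _ (sub_nonneg.2 htr)))

theorem IsSCLESemigroup.sgConv_mem_genDomain_of_pos (hX : SequentiallyComplete X)
    (hT : IsSCLESemigroup T) {r : ℝ} (hr : 0 < r)
    (hB : ∀ f : ℝ → U, ContinuousOn f (Icc 0 r) → sgConv T (fun s => B (f s)) r ∈ genDomain T)
    {r₀ : ℝ} (hr₀ : 0 < r₀) {f : ℝ → U} (hf : ContinuousOn f (Icc 0 r₀)) :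
    sgConv T (fun s => B (f s)) r₀ ∈ genDomain T := by
  obtain ⟨n, hn⟩ := exists_nat_ge (r₀ / r)
  rw [div_le_iff₀ hr] at hn
  induction n generalizing r₀ f with
  | zero => simp at hn; linarith
  | succ n ih =>
    rcases le_or_gt r₀ r with hr₀r | hrr₀
    · have hf' : ContinuousOn (fun s => f (min s r₀)) (Icc 0 r) :=
        hf.comp (continuous_id.min continuous_const).continuousOn fun s hs =>
          ⟨le_min hs.1 hr₀.le, min_le_right _ _⟩
      rw [sgConv_congr (g' := fun s => B (f (min s r₀))) fun s hs => by simp [min_eq_left hs.2]]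
      exact hT.sgConv_mem_genDomain_of_mem_Icc hX hr.le hB hf' ⟨hr₀.le, hr₀r⟩
    · have hsplit := hT.sgConv_add hX (sub_pos.2 hrr₀).le hr.le (g := fun s => B (f s))
        (by rw [sub_add_cancel]; exact B.continuous.comp_continuousOn hf)
      rw [sub_add_cancel] at hsplit
      rw [hsplit]
      exact genDomain_add (hT.apply_mem_genDomain hr.le (ih (sub_pos.2 hrr₀)
        (hf.mono (Icc_subset_Icc_right (by linarith))) (by push_cast at hn; linarith)))
        (hB _ (hf.comp (continuousOn_id.add continuousOn_const) fun s hs =>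
          ⟨by linarith [hs.1], by linarith [hs.2]⟩))

end Regularity

theorem stmt10_general {X U : Type*} [AddCommGroup X] [Module ℝ X] [UniformSpace X] [IsUniformAddGroup X]
    [ContinuousSMul ℝ X] [LocallyConvexSpace ℝ X] [T2Space X]
    [AddCommGroup U] [Module ℝ U] [UniformSpace U]
    (hX : SequentiallyComplete X)
    (T : ℝ → X →L[ℝ] X) (hT : IsSCLESemigroup T)
    (B : U →L[ℝ] X) :
    (∀ r : ℝ, 0 < r →
      (∀ f : ℝ → U, ContinuousOn f (Set.Icc (0:ℝ) r) →
        sgConv T (fun s => B (f s)) r ∈ genDomain T) →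
      ∀ f : ℝ → U, ContinuousOn f (Set.Icc (0:ℝ) r) →
        ∀ t ∈ Set.Icc (0:ℝ) r, sgConv T (fun s => B (f s)) t ∈ genDomain T) ∧
    (∀ r : ℝ, 0 < r →
      (∀ f : ℝ → U, ContinuousOn f (Set.Icc (0:ℝ) r) →
        sgConv T (fun s => B (f s)) r ∈ genDomain T) →
      ∀ r₀ : ℝ, 0 < r₀ →
        ∀ f : ℝ → U, ContinuousOn f (Set.Icc (0:ℝ) r₀) →
          sgConv T (fun s => B (f s)) r₀ ∈ genDomain T) :=
  ⟨fun _ hr hB _ hf _ ht => hT.sgConv_mem_genDomain_of_mem_Icc hX hr.le hB hf ht,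
    fun _ hr hB _ hr₀ _ hf => hT.sgConv_mem_genDomain_of_pos hX hr hB hr₀ hf⟩

theorem stmt10 {X U : Type*} [AddCommGroup X] [Module ℝ X] [UniformSpace X] [IsUniformAddGroup X]
    [ContinuousSMul ℝ X] [LocallyConvexSpace ℝ X] [T2Space X]
    [AddCommGroup U] [Module ℝ U] [UniformSpace U] [IsUniformAddGroup U]
    [ContinuousSMul ℝ U] [LocallyConvexSpace ℝ U] [T2Space U]
    (hX : SequentiallyComplete X)
    (T : ℝ → X →L[ℝ] X) (hT : IsSCLESemigroup T)
    (B : U →L[ℝ] X) :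
    (∀ r : ℝ, 0 < r →
      (∀ f : ℝ → U, ContinuousOn f (Set.Icc (0:ℝ) r) →
        sgConv T (fun s => B (f s)) r ∈ genDomain T) →
      ∀ f : ℝ → U, ContinuousOn f (Set.Icc (0:ℝ) r) →
        ∀ t ∈ Set.Icc (0:ℝ) r, sgConv T (fun s => B (f s)) t ∈ genDomain T) ∧
    (∀ r : ℝ, 0 < r →
      (∀ f : ℝ → U, ContinuousOn f (Set.Icc (0:ℝ) r) →
        sgConv T (fun s => B (f s)) r ∈ genDomain T) →
      ∀ r₀ : ℝ, 0 < r₀ →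
        ∀ f : ℝ → U, ContinuousOn f (Set.Icc (0:ℝ) r₀) →
          sgConv T (fun s => B (f s)) r₀ ∈ genDomain T) :=
  stmt10_general hX T hT B
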